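/- Let (X, 𝒜, 𝒩) be the coproduct of a family ⟨(X_i, 𝒜_i, 𝒩_i)⟩_{i∈I} of saturated ccc MSNs, let (Y, ℬ) be a nonempty measurable space, let ℰ ⊆ 𝒜 be an 𝒩-generating collection, and let ⟨f_E⟩_{E∈ℰ} be a compatible family subordinated to ℰ. Then this family admits a gluing f : X → Y, and any two gluings coincide outside a set of 𝒩. -/

import Mathlib

open Set MeasureTheory ENNReal

namespace MSNPaper

variable {X Y : Type*}

/-- `A` is a σ-algebra of subsets of the carrier set `Z`. -/
def IsSigmaAlgebraOn (Z : Set X) (A : Set (Set X)) : Prop :=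
  (∀ s ∈ A, s ⊆ Z) ∧ ∅ ∈ A ∧ (∀ s ∈ A, Z \ s ∈ A) ∧
    ∀ f : ℕ → Set X, (∀ n, f n ∈ A) → (⋃ n, f n) ∈ A

/-- `N` is a σ-ideal of the σ-algebra `A`. -/
def IsSigmaIdeal (A N : Set (Set X)) : Prop :=
  N ⊆ A ∧ ∅ ∈ N ∧ (∀ s ∈ A, ∀ t ∈ N, s ⊆ t → s ∈ N) ∧
    ∀ f : ℕ → Set X, (∀ n, f n ∈ N) → (⋃ n, f n) ∈ N

/-- A measurable space with negligibles (MSN) on the carrier set `Z`. -/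
def IsMSN (Z : Set X) (A N : Set (Set X)) : Prop :=
  IsSigmaAlgebraOn Z A ∧ IsSigmaIdeal A N

/-- The MSN is saturated: every subset of a negligible set is negligible. -/
def Saturated (N : Set (Set X)) : Prop :=
  ∀ s t : Set X, s ⊆ t → t ∈ N → s ∈ N

/-- `U` is an `N`-essential upper bound of the collection `E`. -/
def IsEssUB (N E : Set (Set X)) (U : Set X) : Prop :=
  ∀ e ∈ E, e \ U ∈ N

/-- `S` is an `N`-essential supremum of the collection `E ⊆ A`. -/
def IsEssSup (A N E : Set (Set X)) (S : Set X) : Prop :=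
  S ∈ A ∧ IsEssUB N E S ∧ ∀ U ∈ A, IsEssUB N E U → S \ U ∈ N

/-- Every collection of measurable sets admits an essential supremum. -/
def Localizable (A N : Set (Set X)) : Prop :=
  ∀ E ⊆ A, ∃ S, IsEssSup A N E S

/-- The members of `E` pairwise intersect negligibly. -/
def AlmostDisjointed (N E : Set (Set X)) : Prop :=
  E.Pairwise fun e e' => e ∩ e' ∈ N

/-- Countable chain condition: almost disjointed families of non-negligible
measurable sets are countable. -/
def CCC (A N : Set (Set X)) : Prop :=
  ∀ E : Set (Set X), E ⊆ A → (∀ e ∈ E, e ∉ N) → AlmostDisjointed N E → E.Countable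

/-- Local determination for an MSN with carrier `Z`. -/
def LocallyDetermined (Z : Set X) (A N : Set (Set X)) : Prop :=
  ∀ E ⊆ A, IsEssSup A N E Z → ∀ s ⊆ Z, (∀ e ∈ E, s ∩ e ∈ A) → s ∈ A

/-- Trace of a collection of sets on a subset `Z`. -/
def Sub (A : Set (Set X)) (Z : Set X) : Set (Set X) := (· ∩ Z) '' A


/-- The coproduct σ-algebra / σ-ideal on the disjoint union of a family of MSNs:
a set is measurable (negligible) iff its trace on each summand is. -/
def coProd {I : Type*} {Xf : I → Type*} (A : ∀ i, Set (Set (Xf i))) :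
    Set (Set ((i : I) × Xf i)) :=
  {s | ∀ i, Sigma.mk i ⁻¹' s ∈ A i}

/-- A family of partially defined maps `g e : e → Y` (each represented by a total map
whose behaviour matters only on `e`), each measurable from the trace σ-algebra on `e`
to `B`. -/
def Subordinate {X Y : Type*} (A : Set (Set X)) (B : Set (Set Y)) (E : Set (Set X))
    (g : Set X → X → Y) : Prop :=
  ∀ e ∈ E, ∀ b ∈ B, e ∩ g e ⁻¹' b ∈ Sub A e

/-- The family is compatible: any two of its members coincide almost everywhere
on the intersection of their domains. -/
def Compatible {X Y : Type*} (N : Set (Set X)) (E : Set (Set X))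
    (g : Set X → X → Y) : Prop :=
  ∀ e ∈ E, ∀ e' ∈ E, e ∩ e' ∩ {x | g e x ≠ g e' x} ∈ N

/-- `f` is a gluing of the family `g` subordinated to `E`: it is `(A, B)`-measurable and
coincides with `g e` almost everywhere on `e`, for each `e ∈ E`. -/
def IsGluing {X Y : Type*} (A N : Set (Set X)) (B : Set (Set Y)) (E : Set (Set X))
    (g : Set X → X → Y) (f : X → Y) : Prop :=
  (∀ b ∈ B, f ⁻¹' b ∈ A) ∧ ∀ e ∈ E, e ∩ {x | f x ≠ g e x} ∈ N


/-! In a saturated ccc MSN, Zorn's lemma gives a maximal family of pairwise disjoint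
non-negligible measurable sets, each contained in a member of `ℰ`; by ccc it is countable,
so its union is measurable, and maximality makes it an essential upper bound of `ℰ`, hence
conegligible since `ℰ` is generating. Gluing the `f_E` along this countable partition gives a
measurable map (saturation takes care of the negligible remainder), and compatibility, used
countably often, makes it agree almost everywhere with every `f_E`; the same partition shows
that two gluings agree almost everywhere. On a coproduct all of this is done summand by
summand. -/

open Function

theorem exists_maximal_pairwiseDisjoint_subset {α : Type*} (𝒟 : Set (Set α)) :
    ∃ M, Maximal (fun M : Set (Set α) => M ⊆ 𝒟 ∧ M.PairwiseDisjoint id) M :=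
  zorn_subset _ fun c hc hchain =>
    ⟨⋃₀ c, ⟨sUnion_subset fun _ hM => (hc hM).1,
      (pairwiseDisjoint_sUnion hchain.directedOn).2 fun _ hM => (hc hM).2⟩,
      fun _ => subset_sUnion_of_mem⟩

section Gluing

variable {J : Type*} {D : J → Set X} {G : J → X → Y} {y₀ : Y}

open Classical in
noncomputable def glueAlong (D : J → Set X) (G : J → X → Y) (y₀ : Y) (x : X) : Y :=
  if h : ∃ j, x ∈ D j then G h.choose x else y₀

theorem glueAlong_eq_of_mem (hD : Pairwise (Disjoint on D)) {j : J} {x : X} (hx : x ∈ D j) :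
    glueAlong D G y₀ x = G j x := by
  have h : ∃ j, x ∈ D j := ⟨j, hx⟩
  rw [glueAlong, dif_pos h,
    hD.eq fun hdisj => hdisj.notMem_of_mem_left h.choose_spec hx]

theorem preimage_glueAlong_inter_iUnion (hD : Pairwise (Disjoint on D)) (s : Set Y) :
    glueAlong D G y₀ ⁻¹' s ∩ ⋃ j, D j = ⋃ j, D j ∩ G j ⁻¹' s := by
  ext x
  simp only [mem_inter_iff, mem_preimage, mem_iUnion]
  constructor
  · rintro ⟨hxs, j, hxj⟩
    exact ⟨j, hxj, by rwa [glueAlong_eq_of_mem hD hxj] at hxs⟩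
  · rintro ⟨j, hxj, hxs⟩
    exact ⟨by rwa [glueAlong_eq_of_mem hD hxj], j, hxj⟩

end Gluing

section SingleMSN

variable {A N : Set (Set X)} {ι : Type*} {e : ι → Set X}

abbrev IsSigmaAlgebraOn.toMeasurableSpace (hA : IsSigmaAlgebraOn univ A) :
    MeasurableSpace X where
  MeasurableSet' := (· ∈ A)
  measurableSet_empty := hA.2.1
  measurableSet_compl s hs := by simpa [compl_eq_univ_sdiff] using hA.2.2.1 s hs
  measurableSet_iUnion := hA.2.2.2

theorem IsSigmaIdeal.sUnion_mem (hN : IsSigmaIdeal A N) {S : Set (Set X)} (hS : S.Countable)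
    (hSN : S ⊆ N) : ⋃₀ S ∈ N := by
  rcases S.eq_empty_or_nonempty with rfl | hne
  · simpa using hN.2.1
  · obtain ⟨f, rfl⟩ := hS.exists_eq_range hne
    rw [sUnion_range]
    exact hN.2.2.2 f fun n => hSN (mem_range_self n)

def coNegligible (hN : IsSigmaIdeal A N) (hsat : Saturated N) : Filter X :=
  .ofCountableUnion N (fun _ hS hSN => hN.sUnion_mem hS hSN) fun t ht s hs => hsat s t hs ht

instance (hN : IsSigmaIdeal A N) (hsat : Saturated N) :
    CountableInterFilter (coNegligible hN hsat) :=
  Filter.countableInter_ofCountableUnion ..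

theorem eventually_coNegligible_iff (hN : IsSigmaIdeal A N) (hsat : Saturated N)
    {p : X → Prop} : (∀ᶠ x in coNegligible hN hsat, p x) ↔ {x | ¬p x} ∈ N :=
  Iff.rfl

theorem mem_coNegligible_iff (hN : IsSigmaIdeal A N) (hsat : Saturated N) {s : Set X} :
    s ∈ coNegligible hN hsat ↔ univ \ s ∈ N := by
  rw [← compl_eq_univ_sdiff]
  rfl

theorem eventually_coNegligible_mem_imp_iff (hN : IsSigmaIdeal A N) (hsat : Saturated N)
    {s : Set X} {p : X → Prop} :
    (∀ᶠ x in coNegligible hN hsat, x ∈ s → p x) ↔ s ∩ {x | ¬p x} ∈ N := by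
  simp only [eventually_coNegligible_iff, Classical.not_imp]
  rfl

theorem exists_countable_pairwiseDisjoint_cover (hA : IsSigmaAlgebraOn univ A)
    (hN : IsSigmaIdeal A N) (hccc : CCC A N) {E : Set (Set X)} (hEA : E ⊆ A)
    (hgen : IsEssSup A N E univ) :
    ∃ M : Set (Set X), M.Countable ∧ M ⊆ A ∧ M.PairwiseDisjoint id ∧
      (∀ d ∈ M, ∃ e ∈ E, d ⊆ e) ∧ univ \ ⋃₀ M ∈ N := by
  let := hA.toMeasurableSpace
  obtain ⟨M, ⟨hM, hMdisj⟩, hMmax⟩ :=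
    exists_maximal_pairwiseDisjoint_subset {d | d ∈ A ∧ d ∉ N ∧ ∃ e ∈ E, d ⊆ e}
  have hMc : M.Countable := hccc M (fun d hd => (hM hd).1) (fun d hd => (hM hd).2.1)
    fun d hd d' hd' hne => show d ∩ d' ∈ N from (hMdisj hd hd' hne).inter_eq ▸ hN.2.1
  have hMA : MeasurableSet (⋃₀ M) := MeasurableSet.sUnion hMc fun d hd => (hM hd).1
  refine ⟨M, hMc, fun d hd => (hM hd).1, hMdisj, fun d hd => (hM hd).2.2,
    hgen.2.2 _ hMA fun e he => ?_⟩
  -- A non-negligible `e \ ⋃₀ M` could be added to `M`, against maximality.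
  by_contra hne
  have hdisj : (insert (e \ ⋃₀ M) M).PairwiseDisjoint id :=
    hMdisj.insert fun d hd _ => disjoint_sdiff_left.mono_right (subset_sUnion_of_mem hd)
  have hmem : e \ ⋃₀ M ∈ M := by
    have hmeas : MeasurableSet (e \ ⋃₀ M) := (show MeasurableSet e from hEA he).diff hMA
    exact hMmax ⟨insert_subset ⟨hmeas, hne, e, he, sdiff_subset⟩ hM, hdisj⟩
      (subset_insert _ _) (mem_insert _ _)
  exact hne (disjoint_sdiff_left.eq_bot_of_le (subset_sUnion_of_mem hmem) ▸ hN.2.1)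

theorem exists_gluing_of_ccc [Nonempty Y] (hA : IsSigmaAlgebraOn univ A)
    (hN : IsSigmaIdeal A N) (hsat : Saturated N) (hccc : CCC A N) (he : ∀ k, e k ∈ A)
    (hgen : IsEssSup A N (range e) univ) {B : Set (Set Y)} {g : ι → X → Y}
    (hsub : ∀ k, ∀ b ∈ B, e k ∩ g k ⁻¹' b ∈ A)
    (hcomp : ∀ k l, e k ∩ e l ∩ {x | g k x ≠ g l x} ∈ N) :
    ∃ f : X → Y, (∀ b ∈ B, f ⁻¹' b ∈ A) ∧ ∀ k, e k ∩ {x | f x ≠ g k x} ∈ N := by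
  let := hA.toMeasurableSpace
  obtain ⟨M, hMc, hMA, hMdisj, hMe, hMcov⟩ :=
    exists_countable_pairwiseDisjoint_cover hA hN hccc (range_subset_iff.2 he) hgen
  have := hMc.to_subtype
  have hD : Pairwise (Disjoint on fun d : M => (d : Set X)) :=
    (pairwise_subtype_iff_pairwise_set M Disjoint).2 hMdisj
  choose κ hκ using fun d : M => exists_range_iff.1 (hMe d d.2)
  rw [sUnion_eq_iUnion] at hMcov
  set f := glueAlong (fun d : M => (d : Set X)) (fun d => g (κ d)) (Classical.arbitrary Y)
  refine ⟨f, fun b hb => ?_, fun k => ?_⟩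
  · have hpiece (d : M) : MeasurableSet ((d : Set X) ∩ g (κ d) ⁻¹' b) := by
      rw [← inter_eq_left.2 (hκ d), inter_assoc]
      exact (show MeasurableSet (d : Set X) from hMA d.2).inter (hsub _ b hb)
    rw [← inter_union_sdiff (f ⁻¹' b) (⋃ d : M, (d : Set X)),
      preimage_glueAlong_inter_iUnion hD]
    exact (MeasurableSet.iUnion hpiece).union
      (hN.1 (hsat _ _ (sdiff_subset_sdiff_left (subset_univ _)) hMcov))
  · have hcompat : ∀ᶠ x in coNegligible hN hsat,
        ∀ d : M, x ∈ e (κ d) → x ∈ e k → g (κ d) x = g k x :=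
      eventually_countable_forall.2 fun d =>
        ((eventually_coNegligible_mem_imp_iff hN hsat).2 (hcomp (κ d) k)).mono
          fun x h hd hk => h ⟨hd, hk⟩
    refine (eventually_coNegligible_mem_imp_iff hN hsat).1 ?_
    filter_upwards [(mem_coNegligible_iff hN hsat).2 hMcov, hcompat] with x hx h hk
    obtain ⟨d, hxd⟩ := mem_iUnion.1 hx
    exact (glueAlong_eq_of_mem hD hxd).trans (h d (hκ d hxd) hk)

theorem gluing_ae_eq_of_ccc (hA : IsSigmaAlgebraOn univ A) (hN : IsSigmaIdeal A N)
    (hsat : Saturated N) (hccc : CCC A N) (he : ∀ k, e k ∈ A)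
    (hgen : IsEssSup A N (range e) univ) {g : ι → X → Y} {f f' : X → Y}
    (hf : ∀ k, e k ∩ {x | f x ≠ g k x} ∈ N) (hf' : ∀ k, e k ∩ {x | f' x ≠ g k x} ∈ N) :
    {x | f x ≠ f' x} ∈ N := by
  obtain ⟨M, hMc, -, -, hMe, hMcov⟩ :=
    exists_countable_pairwiseDisjoint_cover hA hN hccc (range_subset_iff.2 he) hgen
  have hagree : ∀ᶠ x in coNegligible hN hsat, ∀ d ∈ M, x ∈ d → f x = f' x := by
    refine (eventually_countable_ball hMc).2 fun d hd => ?_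
    obtain ⟨k, hk⟩ := exists_range_iff.1 (hMe d hd)
    filter_upwards [(eventually_coNegligible_mem_imp_iff hN hsat).2 (hf k),
      (eventually_coNegligible_mem_imp_iff hN hsat).2 (hf' k)] with x h h' hxd
    exact (h (hk hxd)).trans (h' (hk hxd)).symm
  refine (eventually_coNegligible_iff hN hsat (p := fun x => f x = f' x)).1 ?_
  filter_upwards [(mem_coNegligible_iff hN hsat).2 hMcov, hagree] with x ⟨d, hd, hxd⟩ h
  exact h d hd hxd

end SingleMSN

section Coproduct

variable {I : Type*} {Xf : I → Type*} {A N : ∀ i, Set (Set (Xf i))}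

theorem isEssSup_univ_preimage_sigmaMk (hA : ∀ i, univ ∈ A i) (hN : ∀ i, ∅ ∈ N i)
    {E : Set (Set ((i : I) × Xf i))} (hgen : IsEssSup (coProd A) (coProd N) E univ) (i : I) :
    IsEssSup (A i) (N i) (range fun e : E => Sigma.mk i ⁻¹' (e : Set _)) univ := by
  classical
  refine ⟨hA i, fun _ _ => by simpa using hN i, fun U hU hUB => ?_⟩
  let U' : Set ((i : I) × Xf i) := univ.sigma (update (fun _ => univ) i U)
  have hpre (j : I) : Sigma.mk j ⁻¹' U' = update (fun _ => univ) i U j :=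
    mk_preimage_sigma (mem_univ j)
  have hU'A : U' ∈ coProd A := fun j => by
    rw [hpre]
    revert j
    exact (forall_update_iff _ fun j V => V ∈ A j).2 ⟨hU, fun j _ => hA j⟩
  have hU'B : IsEssUB (coProd N) E U' := fun e he j => by
    rw [preimage_sdiff, hpre]
    revert j
    refine (forall_update_iff _ fun j V => Sigma.mk j ⁻¹' e \ V ∈ N j).2
      ⟨hUB _ ⟨⟨e, he⟩, rfl⟩, fun j _ => ?_⟩
    simpa using hN j
  simpa [hpre] using hgen.2.2 U' hU'A hU'B i

theorem Subordinate.inter_preimage_mem_coProd {Y : Type*} {B : Set (Set Y)}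
    (hA : ∀ i, IsSigmaAlgebraOn univ (A i)) {E : Set (Set ((i : I) × Xf i))}
    (hEA : E ⊆ coProd A)
    {g : Set ((i : I) × Xf i) → (i : I) × Xf i → Y} (hsub : Subordinate (coProd A) B E g)
    {e : Set ((i : I) × Xf i)} (he : e ∈ E) {b : Set Y} (hb : b ∈ B) :
    e ∩ g e ⁻¹' b ∈ coProd A := by
  obtain ⟨a, ha, hae⟩ := hsub e he b hb
  intro i
  let := (hA i).toMeasurableSpace
  rw [← hae]
  exact (show MeasurableSet (Sigma.mk i ⁻¹' a) from ha i).inter (hEA he i)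

end Coproduct

theorem gluing_cccc_general {I : Type*} {Xf : I → Type*} {Y : Type*}
    (A N : ∀ i, Set (Set (Xf i)))
    (hMSN : ∀ i, IsMSN Set.univ (A i) (N i))
    (hsat : ∀ i, Saturated (N i)) (hccc : ∀ i, CCC (A i) (N i))
    (B : Set (Set Y)) [Nonempty Y]
    (E : Set (Set ((i : I) × Xf i))) (hEA : E ⊆ coProd A)
    (hgen : IsEssSup (coProd A) (coProd N) E Set.univ)
    (g : Set ((i : I) × Xf i) → (i : I) × Xf i → Y)
    (hsub : Subordinate (coProd A) B E g) (hcomp : Compatible (coProd N) E g) :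
    (∃ f, IsGluing (coProd A) (coProd N) B E g f) ∧
      ∀ f f', IsGluing (coProd A) (coProd N) B E g f →
        IsGluing (coProd A) (coProd N) B E g f' →
        {x | f x ≠ f' x} ∈ coProd N := by
  have hA i := (hMSN i).1
  have hN i := (hMSN i).2
  have hgen' := isEssSup_univ_preimage_sigmaMk (fun i => hgen.1 i) (fun i => (hN i).2.1) hgen
  have hEA' (i : I) (e : E) : Sigma.mk i ⁻¹' (e : Set _) ∈ A i := hEA e.2 i
  choose f hfB hfE using fun i => exists_gluing_of_ccc (hA i) (hN i) (hsat i) (hccc i)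
    (hEA' i) (hgen' i) (fun e b hb => hsub.inter_preimage_mem_coProd hA hEA e.2 hb i)
    fun e e' => hcomp e e.2 e' e'.2 i
  refine ⟨⟨fun p => f p.1 p.2, fun b hb i => hfB i b hb, fun e he i => hfE i ⟨e, he⟩⟩,
    fun f f' hf hf' i => ?_⟩
  exact gluing_ae_eq_of_ccc (hA i) (hN i) (hsat i) (hccc i) (hEA' i) (hgen' i)
    (fun e => hf.2 e e.2 i) (fun e => hf'.2 e e.2 i)

/-- On a coproduct of saturated ccc MSNs, every compatible family subordinated to a
generating collection admits a gluing, unique up to equality almost everywhere,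
with no restriction on the target measurable space. -/
theorem gluing_cccc {I : Type*} {Xf : I → Type*} {Y : Type*}
    (A N : ∀ i, Set (Set (Xf i)))
    (hMSN : ∀ i, IsMSN Set.univ (A i) (N i))
    (hsat : ∀ i, Saturated (N i)) (hccc : ∀ i, CCC (A i) (N i))
    (B : Set (Set Y)) (hB : IsSigmaAlgebraOn Set.univ B) [Nonempty Y]
    (E : Set (Set ((i : I) × Xf i))) (hEA : E ⊆ coProd A)
    (hgen : IsEssSup (coProd A) (coProd N) E Set.univ)
    (g : Set ((i : I) × Xf i) → (i : I) × Xf i → Y)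
    (hsub : Subordinate (coProd A) B E g) (hcomp : Compatible (coProd N) E g) :
    (∃ f, IsGluing (coProd A) (coProd N) B E g f) ∧
      ∀ f f', IsGluing (coProd A) (coProd N) B E g f →
        IsGluing (coProd A) (coProd N) B E g f' →
        {x | f x ≠ f' x} ∈ coProd N :=
  gluing_cccc_general A N hMSN hsat hccc B E hEA hgen g hsub hcomp

end MSNPaper
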